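/- Let f ∈ k[x,y,z] be homogeneous of degree d, char k = 0, δ = det(Hessian f), H_yz = f_z∂_y − f_y∂_z. Then (d-1)·(f_x·H_yz(Δ_xx) + f_y·H_yz(Δ_xy) + f_z·H_yz(Δ_xz)) = x·(f_z·∂_y δ − f_y·∂_z δ), where Δ_xx, Δ_xy, Δ_xz are the first-row cofactors of the Hessian of f. -/

import Mathlib

open MvPolynomial

noncomputable def dX {k : Type*} [CommSemiring k] (f : MvPolynomial (Fin 3) k) :
    MvPolynomial (Fin 3) k := pderiv 0 f
noncomputable def dY {k : Type*} [CommSemiring k] (f : MvPolynomial (Fin 3) k) :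
    MvPolynomial (Fin 3) k := pderiv 1 f
noncomputable def dZ {k : Type*} [CommSemiring k] (f : MvPolynomial (Fin 3) k) :
    MvPolynomial (Fin 3) k := pderiv 2 f

/-!
Differentiating Euler's identity gives `∑ᵢ xᵢ ∂ᵢ∂ⱼ f = (d - 1) ∂ⱼ f`, i.e. `x ᵥ* Hess f = (d - 1) ∇f`.
Multiplying on the right by the adjugate of the Hessian turns this into
`x₀ δ = (d - 1) (f_x Δ_xx + f_y Δ_xy + f_z Δ_xz)`. Now apply the derivation
`H_yz = ∑ᵢ wᵢ ∂ᵢ` with `w = (0, f_z, -f_y)`. It kills `x₀`, and the terms where it hits the `f_j`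
add up to the `x`-entry of `w ᵥ* Hess f ᵥ* adj (Hess f) = δ • w`, which vanishes because `w₀ = 0`.
-/

open Matrix

theorem Matrix.vecMul_vecMul_adjugate {n α : Type*} [Fintype n] [DecidableEq n] [CommRing α]
    (v : n → α) (A : Matrix n n α) : v ᵥ* A ᵥ* A.adjugate = A.det • v := by
  rw [vecMul_vecMul, mul_adjugate, vecMul_smul, vecMul_one]

namespace MvPolynomial

variable {R σ : Type*} [CommRing R]

theorem pderiv_pderiv_comm (i j : σ) (f : MvPolynomial σ R) :
    pderiv i (pderiv j f) = pderiv j (pderiv i f) := by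
  -- the commutator is a derivation vanishing on every variable
  have hbracket : ⁅pderiv i, pderiv j⁆ = (0 : Derivation R (MvPolynomial σ R) _) :=
    derivation_ext fun k => by
      classical
      rw [Derivation.commutator_apply]
      simp [pderiv_X, Pi.single_apply, apply_ite]
  rw [← sub_eq_zero, ← Derivation.commutator_apply, hbracket, Derivation.zero_apply]

noncomputable def hessian (f : MvPolynomial σ R) : Matrix σ σ (MvPolynomial σ R) :=
  of fun i j => pderiv i (pderiv j f)

variable [Fintype σ]

noncomputable def derivAlong (w : σ → MvPolynomial σ R) :
    Derivation R (MvPolynomial σ R) (MvPolynomial σ R) :=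
  ∑ i, w i • pderiv i

theorem derivAlong_apply (w : σ → MvPolynomial σ R) (g : MvPolynomial σ R) :
    derivAlong w g = ∑ i, w i * pderiv i g := by
  rw [derivAlong, ← Derivation.coeFnAddMonoidHom_apply, map_sum]
  simp

theorem derivAlong_X (w : σ → MvPolynomial σ R) (i : σ) : derivAlong w (X i) = w i := by
  classical
  simp [derivAlong_apply, pderiv_X, Pi.single_apply]

theorem derivAlong_pderiv (w : σ → MvPolynomial σ R) (f : MvPolynomial σ R) (j : σ) :
    derivAlong w (pderiv j f) = (w ᵥ* hessian f) j := by
  simp [derivAlong_apply, vecMul, dotProduct, hessian]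

theorem IsHomogeneous.X_vecMul_hessian {f : MvPolynomial σ R} {n : ℕ} (hf : f.IsHomogeneous n) :
    X ᵥ* hessian f = (C ((n : R) - 1) : MvPolynomial σ R) • fun j => pderiv j f := by
  classical
  funext j
  have euler := congrArg (pderiv j) hf.sum_X_mul_pderiv
  rw [map_nsmul, nsmul_eq_mul] at euler
  simp only [map_sum, Derivation.leibniz, pderiv_X, smul_eq_mul,
    Pi.single_apply, Finset.sum_add_distrib, mul_ite, mul_one, mul_zero, Finset.sum_ite_eq',
    Finset.mem_univ, if_true, pderiv_pderiv_comm j] at euler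
  simp only [vecMul, dotProduct, hessian, of_apply, Pi.smul_apply, smul_eq_mul, map_sub,
    map_natCast, map_one]
  linear_combination euler

theorem IsHomogeneous.X_mul_det_hessian [DecidableEq σ] {f : MvPolynomial σ R} {n : ℕ}
    (hf : f.IsHomogeneous n) (i : σ) :
    X i * (hessian f).det = C ((n : R) - 1) * ∑ j, pderiv j f * (hessian f).adjugate j i := by
  have h := congr_fun (vecMul_vecMul_adjugate X (hessian f)) i
  rw [hf.X_vecMul_hessian, smul_vecMul] at h
  simp only [Pi.smul_apply, smul_eq_mul] at h
  rw [mul_comm]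
  exact h.symm

theorem IsHomogeneous.X_mul_derivAlong_det_hessian [DecidableEq σ] {f : MvPolynomial σ R} {n : ℕ}
    (hf : f.IsHomogeneous n) {w : σ → MvPolynomial σ R} {i : σ} (hw : w i = 0) :
    X i * derivAlong w (hessian f).det =
      C ((n : R) - 1) * ∑ j, pderiv j f * derivAlong w ((hessian f).adjugate j i) := by
  have hcof : ∑ j, (hessian f).adjugate j i * derivAlong w (pderiv j f) = 0 := by
    have h := congr_fun (vecMul_vecMul_adjugate w (hessian f)) i
    rw [Pi.smul_apply, hw, smul_zero] at h
    simp only [derivAlong_pderiv, mul_comm ((hessian f).adjugate _ i)]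
    exact h
  have hC : derivAlong w (C ((n : R) - 1)) = 0 := (derivAlong w).map_algebraMap _
  have h := congrArg (derivAlong w) (hf.X_mul_det_hessian i)
  simpa only [Derivation.leibniz, derivAlong_X, hw, hC, map_sum, smul_eq_mul,
    Finset.sum_add_distrib, hcof, mul_zero, add_zero] using h

end MvPolynomial

theorem stmt18_general {k : Type*} [Field k] (d : ℕ)
    (f : MvPolynomial (Fin 3) k) (hf : f.IsHomogeneous d) :
    C ((d : k) - 1) *
        (dX f * (dZ f * dY (dY (dY f) * dZ (dZ f) - dZ (dY f) ^ 2)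
            - dY f * dZ (dY (dY f) * dZ (dZ f) - dZ (dY f) ^ 2))
          + dY f * (dZ f * dY (dZ (dX f) * dZ (dY f) - dY (dX f) * dZ (dZ f))
            - dY f * dZ (dZ (dX f) * dZ (dY f) - dY (dX f) * dZ (dZ f)))
          + dZ f * (dZ f * dY (dY (dX f) * dZ (dY f) - dZ (dX f) * dY (dY f))
            - dY f * dZ (dY (dX f) * dZ (dY f) - dZ (dX f) * dY (dY f))))
      = X 0 *
          (dZ f * pderiv 1
              (Matrix.det (Matrix.of fun i j : Fin 3 => pderiv i (pderiv j f)))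
            - dY f * pderiv 2
              (Matrix.det (Matrix.of fun i j : Fin 3 => pderiv i (pderiv j f)))) := by
  have key := hf.X_mul_derivAlong_det_hessian (w := ![0, dZ f, -dY f]) (i := 0) rfl
  obtain ⟨hxx, hxy, hxz⟩ :
      (hessian f).adjugate 0 0 = dY (dY f) * dZ (dZ f) - dZ (dY f) ^ 2 ∧
      (hessian f).adjugate 1 0 = dZ (dX f) * dZ (dY f) - dY (dX f) * dZ (dZ f) ∧
      (hessian f).adjugate 2 0 = dY (dX f) * dZ (dY f) - dZ (dX f) * dY (dY f) := by
    refine ⟨?_, ?_, ?_⟩ <;>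
    · simp only [adjugate_fin_three, hessian, of_apply, cons_val', cons_val_zero, cons_val_one,
        cons_val, cons_val_fin_one, dX, dY, dZ, pderiv_pderiv_comm (1 : Fin 3) 2]
      ring
  rw [Fin.sum_univ_three, hxx, hxy, hxz] at key
  simp only [derivAlong_apply, Fin.sum_univ_three, cons_val_zero, cons_val_one, cons_val_two,
    head_cons, tail_cons, zero_mul, zero_add, hessian] at key
  simp only [dX, dY, dZ] at key ⊢
  linear_combination -key

theorem stmt18 {k : Type*} [Field k] [CharZero k] (d : ℕ)
    (f : MvPolynomial (Fin 3) k) (hf : f.IsHomogeneous d) :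
    C ((d : k) - 1) *
        (dX f * (dZ f * dY (dY (dY f) * dZ (dZ f) - dZ (dY f) ^ 2)
            - dY f * dZ (dY (dY f) * dZ (dZ f) - dZ (dY f) ^ 2))
          + dY f * (dZ f * dY (dZ (dX f) * dZ (dY f) - dY (dX f) * dZ (dZ f))
            - dY f * dZ (dZ (dX f) * dZ (dY f) - dY (dX f) * dZ (dZ f)))
          + dZ f * (dZ f * dY (dY (dX f) * dZ (dY f) - dZ (dX f) * dY (dY f))
            - dY f * dZ (dY (dX f) * dZ (dY f) - dZ (dX f) * dY (dY f))))
      = X 0 *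
          (dZ f * pderiv 1
              (Matrix.det (Matrix.of fun i j : Fin 3 => pderiv i (pderiv j f)))
            - dY f * pderiv 2
              (Matrix.det (Matrix.of fun i j : Fin 3 => pderiv i (pderiv j f)))) :=
  stmt18_general d f hf
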